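/- (Norm preservation under the hash map, exact second moment) For the random hashed feature map, E[‖x‖_φ²] = ‖x‖₂² for every x ∈ R^d. -/

import Mathlib

open Finset

/-- Sign associated to a boolean. -/
noncomputable def sgn (b : Bool) : ℝ := if b then 1 else -1

/-- Hashed inner product for fixed hash `h` and sign `ξ`. -/
noncomputable def hip {d m : ℕ} (h : Fin d → Fin m) (ξ : Fin d → Bool)
    (x x' : Fin d → ℝ) : ℝ :=
  ∑ k : Fin m,
    (∑ j ∈ Finset.univ.filter (fun j => h j = k), sgn (ξ j) * x j) *
    (∑ j ∈ Finset.univ.filter (fun j => h j = k), sgn (ξ j) * x' j)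

/-- Expectation over the uniformly random pair `(h, ξ)`. -/
noncomputable def hashExp (d m : ℕ) (f : (Fin d → Fin m) → (Fin d → Bool) → ℝ) : ℝ :=
  (∑ h : Fin d → Fin m, ∑ ξ : Fin d → Bool, f h ξ) / ((m : ℝ) ^ d * 2 ^ d)

/-!
Expand `‖x‖_φ²` over colliding pairs `(i, j)`, i.e. those with `h i = h j`, each contributing
`ξ i ξ j x_i x_j`. Averaging over the signs kills every off-diagonal pair (flipping `ξ i` negates
its term), while diagonal pairs always collide; so for every fixed `h` the sign average is
already `∑ x_i²`.
-/

lemma sgn_mul_self (b : Bool) : sgn b * sgn b = 1 := by cases b <;> simp [sgn]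

lemma sgn_not (b : Bool) : sgn (!b) = -sgn b := by cases b <;> simp [sgn]

lemma sum_sgn_mul_sgn {ι : Type*} [Fintype ι] [DecidableEq ι] (i j : ι) :
    ∑ ξ : ι → Bool, sgn (ξ i) * sgn (ξ j) = if i = j then 2 ^ Fintype.card ι else 0 := by
  split_ifs with hij
  · subst hij
    simp [sgn_mul_self]
  · have flip_i : Function.Involutive fun ξ : ι → Bool => Function.update ξ i (!ξ i) := by
      intro ξ
      simp
    have sum_flip := Equiv.sum_comp flip_i.toPerm fun ξ : ι → Bool => sgn (ξ i) * sgn (ξ j)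
    simp only [Function.Involutive.coe_toPerm, Function.update_self, sgn_not,
      Function.update_of_ne (Ne.symm hij), neg_mul, sum_neg_distrib] at sum_flip
    linarith

lemma sum_fiber_mul_sum_fiber {ι κ R : Type*} [Fintype ι] [Fintype κ] [DecidableEq κ]
    [CommSemiring R] (g : ι → κ) (a b : ι → R) :
    ∑ k, (∑ i ∈ univ.filter (g · = k), a i) * (∑ j ∈ univ.filter (g · = k), b j) =
      ∑ i, ∑ j, if g i = g j then a i * b j else 0 := by
  calc ∑ k, (∑ i ∈ univ.filter (g · = k), a i) * (∑ j ∈ univ.filter (g · = k), b j)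
      = ∑ k, ∑ i ∈ univ.filter (g · = k), a i * ∑ j ∈ univ.filter (g · = g i), b j := by
        refine sum_congr rfl fun k _ => ?_
        rw [sum_mul]
        refine sum_congr rfl fun i hi => ?_
        rw [(mem_filter.1 hi).2]
    _ = ∑ i, a i * ∑ j ∈ univ.filter (g · = g i), b j := sum_fiberwise _ _ _
    _ = ∑ i, ∑ j, if g i = g j then a i * b j else 0 := by
        refine sum_congr rfl fun i _ => ?_
        rw [sum_filter, mul_sum]
        refine sum_congr rfl fun j _ => ?_
        by_cases hij : g i = g j <;> simp [hij, Ne.symm]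

lemma hip_eq_sum_collisions {d m : ℕ} (h : Fin d → Fin m) (ξ : Fin d → Bool)
    (x x' : Fin d → ℝ) :
    hip h ξ x x' = ∑ i, ∑ j, if h i = h j then sgn (ξ i) * x i * (sgn (ξ j) * x' j) else 0 :=
  sum_fiber_mul_sum_fiber h _ _

lemma sum_hip_eq_two_pow_mul_dotProduct {d m : ℕ} (h : Fin d → Fin m) (x x' : Fin d → ℝ) :
    ∑ ξ : Fin d → Bool, hip h ξ x x' = 2 ^ d * x ⬝ᵥ x' := by
  have sum_sign_term : ∀ i j, (∑ ξ : Fin d → Bool,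
      if h i = h j then sgn (ξ i) * x i * (sgn (ξ j) * x' j) else 0) =
      if i = j then 2 ^ d * (x i * x' i) else 0 := by
    intro i j
    have factor_sign : ∀ ξ : Fin d → Bool,
        (if h i = h j then sgn (ξ i) * x i * (sgn (ξ j) * x' j) else 0) =
          (if h i = h j then x i * x' j else 0) * (sgn (ξ i) * sgn (ξ j)) := by
      intro ξ
      split_ifs <;> ring
    rw [sum_congr rfl fun ξ _ => factor_sign ξ, ← mul_sum, sum_sgn_mul_sgn, Fintype.card_fin]
    by_cases hij : i = j
    · subst hij
      simp [mul_comm]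
    · simp [hij]
  calc ∑ ξ : Fin d → Bool, hip h ξ x x'
      = ∑ i, ∑ j, ∑ ξ : Fin d → Bool,
          if h i = h j then sgn (ξ i) * x i * (sgn (ξ j) * x' j) else 0 := by
        simp only [hip_eq_sum_collisions]
        rw [sum_comm]
        exact sum_congr rfl fun i _ => sum_comm
    _ = 2 ^ d * x ⬝ᵥ x' := by
        simp only [sum_sign_term, sum_ite_eq, mem_univ, if_true, dotProduct, mul_sum]

theorem hashExp_hip_eq_dotProduct {d m : ℕ} (hm : 0 < m) (x x' : Fin d → ℝ) :
    hashExp d m (fun h ξ => hip h ξ x x') = x ⬝ᵥ x' := by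
  have hcard : (0 : ℝ) < (m : ℝ) ^ d * 2 ^ d := by positivity
  rw [hashExp, div_eq_iff hcard.ne']
  simp only [sum_hip_eq_two_pow_mul_dotProduct, sum_const, card_univ, Fintype.card_fun,
    Fintype.card_fin, nsmul_eq_mul]
  push_cast
  ring

/-- Norm preservation in expectation: `E[‖x‖_φ²] = ‖x‖₂²`. -/
theorem hash_norm_second_moment (d m : ℕ) (hm : 0 < m) (x : Fin d → ℝ) :
    hashExp d m (fun h ξ => hip h ξ x x) = ∑ i : Fin d, x i ^ 2 := by
  simp only [hashExp_hip_eq_dotProduct hm, dotProduct, sq]
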